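/- Let α > 0, β > 0 and m ≥ 0 be real numbers, and let y : ℝ → ℝ be continuous on [0, ∞), differentiable on (0, ∞), nonnegative, and satisfy y(0) ≤ m and y'(t) ≤ −α·y(t) + m·β for all t > 0. Then α·y(t) ≤ m/(e·t) + m·β for all t > 0, where e = exp(1). -/

import Mathlib

/-!
If `y' ≤ -α y + b`, then `(y - b/α) e^{α t}` is antitone, which gives the comparison
`y(t) ≤ (y(0) - b/α) e^{-α t} + b/α ≤ m e^{-α t} + b/α`, the last step because `b = mβ ≥ 0`.
Writing `α e^{-α t} = (α t e^{-α t}) / t` and using `ξ e^{-ξ} ≤ e^{-1}` turns the decaying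
term into `m / (e t)`.
-/

open Real Set

section DifferentialInequality

variable {y : ℝ → ℝ} {α b a : ℝ}

theorem antitoneOn_sub_div_mul_exp_of_deriv_le (hcont : ContinuousOn y (Ici a))
    (hdiff : ∀ t ∈ Ioi a, DifferentiableAt ℝ y t)
    (hode : ∀ t ∈ Ioi a, deriv y t ≤ -α * y t + b) (hα : α ≠ 0) :
    AntitoneOn (fun t => (y t - b / α) * exp (α * t)) (Ici a) := by
  have hexp : ∀ t : ℝ, HasDerivAt (fun s => exp (α * s)) (exp (α * t) * α) t := fun t => by
    simpa using ((hasDerivAt_id t).const_mul α).exp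
  refine antitoneOn_of_hasDerivWithinAt_nonpos
    (f' := fun t => deriv y t * exp (α * t) + (y t - b / α) * (exp (α * t) * α)) (convex_Ici a)
    ((hcont.sub continuousOn_const).mul (by fun_prop)) (fun t ht => ?_) (fun t ht => ?_)
  · rw [interior_Ici] at ht
    exact (((hdiff t ht).hasDerivAt.sub_const _).mul (hexp t)).hasDerivWithinAt
  · rw [interior_Ici] at ht
    have hslope : deriv y t + α * (y t - b / α) ≤ 0 := by
      rw [mul_sub, mul_div_cancel₀ b hα]
      linarith [hode t ht]
    calc deriv y t * exp (α * t) + (y t - b / α) * (exp (α * t) * α)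
        = (deriv y t + α * (y t - b / α)) * exp (α * t) := by ring
      _ ≤ 0 := mul_nonpos_of_nonpos_of_nonneg hslope (exp_pos _).le

theorem le_mul_exp_neg_add_div_of_deriv_le (hcont : ContinuousOn y (Ici a))
    (hdiff : ∀ t ∈ Ioi a, DifferentiableAt ℝ y t)
    (hode : ∀ t ∈ Ioi a, deriv y t ≤ -α * y t + b) (hα : α ≠ 0) {t : ℝ} (ht : a ≤ t) :
    y t ≤ (y a - b / α) * exp (-(α * (t - a))) + b / α := by
  have hmono : (y t - b / α) * exp (α * t) ≤ (y a - b / α) * exp (α * a) :=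
    antitoneOn_sub_div_mul_exp_of_deriv_le hcont hdiff hode hα self_mem_Ici (mem_Ici.2 ht) ht
  have hsplit : exp (α * t) = exp (α * (t - a)) * exp (α * a) := by
    rw [← exp_add]; ring_nf
  rw [hsplit, ← mul_assoc, mul_le_mul_iff_left₀ (exp_pos _), ← le_div_iff₀ (exp_pos _)]
    at hmono
  rw [exp_neg, ← div_eq_mul_inv]
  linarith

end DifferentialInequality

theorem mass_control_lemma44_general
    (α β m : ℝ) (hα : 0 < α) (hβ : 0 < β) (hm : 0 ≤ m)
    (y : ℝ → ℝ)
    (hcont : ContinuousOn y (Set.Ici (0 : ℝ)))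
    (hdiff : ∀ t ∈ Set.Ioi (0 : ℝ), DifferentiableAt ℝ y t)
    (hy0 : y 0 ≤ m)
    (hode : ∀ t ∈ Set.Ioi (0 : ℝ), deriv y t ≤ -α * y t + m * β) :
    ∀ t > (0 : ℝ), α * y t ≤ m / (Real.exp 1 * t) + m * β := by
  intro t ht
  have hcomp : y t ≤ m * exp (-(α * t)) + m * β / α := by
    have h := le_mul_exp_neg_add_div_of_deriv_le hcont hdiff hode hα.ne' ht.le
    rw [sub_zero] at h
    have hstart : (y 0 - m * β / α) * exp (-(α * t)) ≤ m * exp (-(α * t)) := by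
      gcongr
      linarith [show 0 ≤ m * β / α by positivity]
    linarith
  have hdecay : α * exp (-(α * t)) ≤ 1 / (exp 1 * t) := by
    rw [le_div_iff₀ (by positivity)]
    calc α * exp (-(α * t)) * (exp 1 * t) = (α * t) * exp (-(α * t)) * exp 1 := by ring
      _ ≤ exp (-1) * exp 1 := by gcongr; exact mul_exp_neg_le_exp_neg_one _
      _ = 1 := by rw [← exp_add, neg_add_cancel, exp_zero]
  calc α * y t ≤ α * (m * exp (-(α * t)) + m * β / α) := by gcongr
    _ = m * (α * exp (-(α * t))) + m * β := by field_simp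
    _ ≤ m * (1 / (exp 1 * t)) + m * β := by gcongr
    _ = m / (exp 1 * t) + m * β := by rw [mul_one_div]

/-- Lemma 4.4 (abstracted): if `y ≥ 0`, `y(0) ≤ m` and `y' ≤ -α y + m β` on `(0,∞)`,
then `α y(t) ≤ m/(e t) + m β` for all `t > 0`. -/
theorem mass_control_lemma44
    (α β m : ℝ) (hα : 0 < α) (hβ : 0 < β) (hm : 0 ≤ m)
    (y : ℝ → ℝ)
    (hcont : ContinuousOn y (Set.Ici (0 : ℝ)))
    (hdiff : ∀ t ∈ Set.Ioi (0 : ℝ), DifferentiableAt ℝ y t)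
    (hnonneg : ∀ t ∈ Set.Ici (0 : ℝ), 0 ≤ y t)
    (hy0 : y 0 ≤ m)
    (hode : ∀ t ∈ Set.Ioi (0 : ℝ), deriv y t ≤ -α * y t + m * β) :
    ∀ t > (0 : ℝ), α * y t ≤ m / (Real.exp 1 * t) + m * β :=
  mass_control_lemma44_general α β m hα hβ hm y hcont hdiff hy0 hode
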